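/- arXiv:2504.00702 — 2 statements merged into one kernel-verified Lean document; each statement's English description precedes it below -/
import Mathlib

section
/- Let ψ ∈ L¹(ℝ²) ∩ L²(ℝ²) and suppose the Fourier transform satisfies ∑_{θ ∈ SO(2,N)} ψ̂(R_θ⁻¹ ω) = 1 for all ω ∈ B(0, ρ₀) (fast reconstruction). Then for every f ∈ L²(ℝ²) with supp f̂ ⊂ B(0,ρ₀), one has f = ∑_{θ ∈ SO(2,N)} W_ψ f(·, θ), where W_ψ f(x,θ) = ∫_{ℝ²} conj(ψ(R_θ⁻¹(y-x))) f(y) dy. -/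
/-!
The orientation score `W_ψ f(·, θ)` is the convolution of `f` with the kernel
`z ↦ conj (ψ (R_θ⁻¹ (-z)))`, whose Fourier transform is `conj (ψ̂ (R_θ⁻¹ ξ))`. So the Fourier
transform of `∑_θ W_ψ f(·, θ)` is `f̂ · ∑_θ conj (ψ̂ (R_θ⁻¹ ·))`, which is `f̂` because `f̂`
vanishes off `B(0, ρ₀)`. Both sides are integrable, and an integrable function is determined
almost everywhere by its Fourier transform: pair it with `φ = 𝓕 (𝓕⁻ Φ)` for smooth compactly
supported `φ` and move `𝓕` onto the function.
-/

open Real MeasureTheory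
open scoped FourierTransform

noncomputable section

/-- The Euclidean plane. -/
abbrev E2 := EuclideanSpace ℝ (Fin 2)

/-- Counter-clockwise rotation of the plane by angle `θ`. -/
def rotE (θ : ℝ) (v : E2) : E2 :=
  (WithLp.equiv 2 (Fin 2 → ℝ)).symm
    ![Real.cos θ * v 0 - Real.sin θ * v 1, Real.sin θ * v 0 + Real.cos θ * v 1]

open scoped ComplexConjugate SchwartzMap Convolution

section
variable {V : Type*} [NormedAddCommGroup V] [InnerProductSpace ℝ V] [FiniteDimensional ℝ V]
  [MeasurableSpace V] [BorelSpace V]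

theorem Real.fourier_finset_sum {E ι : Type*} [NormedAddCommGroup E] [NormedSpace ℂ E]
    (s : Finset ι) {F : ι → V → E} (hF : ∀ i ∈ s, Integrable (F i)) (ξ : V) :
    𝓕 (fun x => ∑ i ∈ s, F i x) ξ = ∑ i ∈ s, 𝓕 (F i) ξ := by
  simp only [Real.fourier_eq, Finset.smul_sum]
  exact integral_finsetSum s fun i hi => (Real.fourierIntegral_convergent_iff ξ).2 (hF i hi)

theorem Real.fourier_conj_comp_neg (g : V → ℂ) (ξ : V) :
    𝓕 (fun x => conj (g (-x))) ξ = conj (𝓕 g ξ) := by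
  rw [Real.fourier_eq, Real.fourier_eq, ← integral_conj, ← integral_neg_eq_self]
  congr 1
  ext x
  simp [Circle.smul_def, inner_neg_left, Real.fourierChar_apply, ← Complex.exp_conj, map_ofNat]

theorem Real.fourier_conj_comp_linearIsometryEquiv_neg (g : V → ℂ) (A : V ≃ₗᵢ[ℝ] V) (ξ : V) :
    𝓕 (fun x => conj (g (A (-x)))) ξ = conj (𝓕 g (A ξ)) := by
  rw [← Real.fourier_comp_linearIsometry, ← Real.fourier_conj_comp_neg]
  rfl

theorem MeasureTheory.Integrable.conj_comp_neg_linearIsometryEquiv {g : V → ℂ} (hg : Integrable g)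
    (A : V ≃ₗᵢ[ℝ] V) : Integrable (fun x => conj (g (A (-x)))) := by
  let B := (LinearIsometryEquiv.neg ℝ (E := V)).trans A
  have : Integrable (g ∘ B) :=
    (B.measurePreserving.integrable_comp_emb B.toMeasurableEquiv.measurableEmbedding).2 hg
  exact Complex.conjCLE.toContinuousLinearMap.integrable_comp this

theorem Real.integral_mul_fourier_eq {F : V → ℂ} (hF : Integrable F) (h : 𝓢(V, ℂ)) :
    ∫ x, F x * 𝓕 (⇑h) x = ∫ ξ, 𝓕 F ξ * h ξ := by
  have := VectorFourier.integral_fourierIntegral_smul_eq_flip (L := innerₗ V)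
    Real.continuous_fourierChar continuous_inner hF (h.integrable (μ := volume))
  simp only [smul_eq_mul, flip_innerₗ] at this
  exact this.symm

theorem MeasureTheory.Integrable.ae_eq_of_fourier_eq {F G : V → ℂ} (hF : Integrable F)
    (hG : Integrable G) (h : 𝓕 F = 𝓕 G) : F =ᵐ[volume] G := by
  refine ae_eq_of_integral_contDiff_smul_eq hF.locallyIntegrable hG.locallyIntegrable
    fun φ hφ hφc => ?_
  let Φ : 𝓢(V, ℂ) := (hφc.comp_left (g := Complex.ofRealCLM) rfl).toSchwartzMap (by fun_prop)
  have pairing : ∀ H : V → ℂ, Integrable H → ∫ x, φ x • H x = ∫ ξ, 𝓕 H ξ * 𝓕⁻ Φ ξ := by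
    intro H hH
    rw [← Real.integral_mul_fourier_eq hH, ← SchwartzMap.fourier_coe,
      FourierTransform.fourier_fourierInv_eq]
    simp [Φ, mul_comm]
  rw [pairing F hF, pairing G hG, h]

end

theorem rotE_apply_zero (θ : ℝ) (v : E2) : rotE θ v 0 = cos θ * v 0 - sin θ * v 1 := rfl

theorem rotE_apply_one (θ : ℝ) (v : E2) : rotE θ v 1 = sin θ * v 0 + cos θ * v 1 := rfl

theorem E2.ext {v w : E2} (h₀ : v 0 = w 0) (h₁ : v 1 = w 1) : v = w := by
  ext i
  fin_cases i <;> assumption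

theorem rotE_rotE_neg (θ : ℝ) (v : E2) : rotE θ (rotE (-θ) v) = v := by
  refine E2.ext ?_ ?_ <;> simp only [rotE_apply_zero, rotE_apply_one, cos_neg, sin_neg]
  · linear_combination v 0 * sin_sq_add_cos_sq θ
  · linear_combination v 1 * sin_sq_add_cos_sq θ

theorem norm_rotE (θ : ℝ) (v : E2) : ‖rotE θ v‖ = ‖v‖ := by
  simp only [EuclideanSpace.norm_eq, Fin.sum_univ_two, rotE_apply_zero, rotE_apply_one,
    norm_eq_abs, sq_abs]
  congr 1
  linear_combination (v 0 ^ 2 + v 1 ^ 2) * sin_sq_add_cos_sq θ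

def rotationE2 (θ : ℝ) : E2 ≃ₗᵢ[ℝ] E2 where
  toFun := rotE θ
  invFun := rotE (-θ)
  map_add' v w := by
    refine E2.ext ?_ ?_ <;> simp only [rotE_apply_zero, rotE_apply_one, PiLp.add_apply] <;> ring
  map_smul' c v := by
    refine E2.ext ?_ ?_ <;>
      simp only [rotE_apply_zero, rotE_apply_one, PiLp.smul_apply, smul_eq_mul,
        RingHom.id_apply] <;> ring
  left_inv v := by simpa only [neg_neg] using rotE_rotE_neg (-θ) v
  right_inv := rotE_rotE_neg θ
  norm_map' := norm_rotE θ

theorem coe_rotationE2 (θ : ℝ) : ⇑(rotationE2 θ) = rotE θ := rfl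

theorem fast_reconstruction_general (N : ℕ) (ρ₀ : ℝ)
    (ψ : E2 → ℂ) (hψ1 : Integrable ψ)
    (hrec : ∀ ω ∈ Metric.ball (0 : E2) ρ₀,
      ∑ j ∈ Finset.range N, (starRingEnd ℂ) (𝓕 ψ (rotE (-(2 * π * j / N)) ω)) = 1)
    (f : E2 → ℂ) (hf1 : Integrable f)
    (hsupp : Function.support (𝓕 f) ⊆ Metric.ball (0 : E2) ρ₀) :
    f =ᵐ[volume] fun x : E2 =>
      ∑ j ∈ Finset.range N,
        ∫ y : E2, (starRingEnd ℂ) (ψ (rotE (-(2 * π * j / N)) (y - x))) * f y := by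
  set R : ℕ → E2 ≃ₗᵢ[ℝ] E2 := fun j => rotationE2 (-(2 * π * j / N))
  set g : ℕ → E2 → ℂ := fun j z => conj (ψ (R j (-z)))
  have hg (j : ℕ) : Integrable (g j) := hψ1.conj_comp_neg_linearIsometryEquiv (R j)
  have hfg (j : ℕ) : Integrable (f ⋆[ContinuousLinearMap.mul ℂ ℂ] g j) :=
    hf1.integrable_convolution _ (hg j)
  have hkernel (j : ℕ) (ξ : E2) : 𝓕 (g j) ξ = conj (𝓕 ψ (rotE (-(2 * π * j / N)) ξ)) :=
    Real.fourier_conj_comp_linearIsometryEquiv_neg ψ (R j) ξ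
  have hfourier : 𝓕 (fun x => ∑ j ∈ Finset.range N, (f ⋆[ContinuousLinearMap.mul ℂ ℂ] g j) x)
      = 𝓕 f := by
    ext ξ
    simp only [Real.fourier_finset_sum _ (fun j _ => hfg j),
      Real.fourier_mul_convolution_eq hf1 (hg _), hkernel, ← Finset.mul_sum]
    by_cases hξ : ξ ∈ Metric.ball (0 : E2) ρ₀
    · rw [hrec ξ hξ, mul_one]
    · rw [Function.notMem_support.1 (mt (@hsupp ξ) hξ), zero_mul]
  refine (hf1.ae_eq_of_fourier_eq (integrable_finsetSum _ fun j _ => hfg j)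
    hfourier.symm).trans (.of_eq ?_)
  ext x
  refine Finset.sum_congr rfl fun j _ => ?_
  rw [convolution_def]
  congr 1 with y
  simp [g, R, coe_rotationE2, mul_comm]

/-- **Fast reconstruction by summing over orientations**: if
`∑_{θ ∈ SO(2,N)} conj(ψ̂(R_θ⁻¹ ω)) = 1` on `B(0,ρ₀)` then every disk-limited
`f ∈ L¹ ∩ L²` satisfies `f = ∑_{θ ∈ SO(2,N)} W_ψ f(·, θ)`, where
`W_ψ f(x,θ) = ∫ conj(ψ(R_θ⁻¹(y - x))) f(y) dy`. -/
theorem fast_reconstruction (N : ℕ) (hN : 1 ≤ N) (ρ₀ : ℝ) (hρ₀ : 0 < ρ₀)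
    (ψ : E2 → ℂ) (hψ1 : Integrable ψ) (hψ2 : MemLp ψ 2 volume)
    (hrec : ∀ ω ∈ Metric.ball (0 : E2) ρ₀,
      ∑ j ∈ Finset.range N, (starRingEnd ℂ) (𝓕 ψ (rotE (-(2 * π * j / N)) ω)) = 1)
    (f : E2 → ℂ) (hf1 : Integrable f) (hf2 : MemLp f 2 volume)
    (hsupp : Function.support (𝓕 f) ⊆ Metric.ball (0 : E2) ρ₀) :
    f =ᵐ[volume] fun x : E2 =>
      ∑ j ∈ Finset.range N,
        ∫ y : E2, (starRingEnd ℂ) (ψ (rotE (-(2 * π * j / N)) (y - x))) * f y :=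
  fast_reconstruction_general N ρ₀ ψ hψ1 hrec f hf1 hsupp

end
end

section
/- For the operators A = M_sin (multiplication by sin φ) and B = -i∂_φ on smooth 2π-periodic functions, the von Mises wavelet Φ_λ^opt(φ) = exp(cos(φ)/λ) achieves uncertainty gap exactly 1: Var(A)·Var(B) = (1/4)|⟨[A,B]⟩|² where expectations are taken in the normalized state Φ_λ^opt/‖Φ_λ^opt‖. -/
/-!
For `Φ = Φ_λ^opt` one has `DΦ = (i/λ)·sin·Φ`: the vectors `AΦ` and `BΦ` are proportional with an
imaginary factor, which is the equality case of Cauchy–Schwarz in Robertson's inequality.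
Concretely, every quantity is a moment of the density `w = Φ² = exp(2 cos φ/λ)`. Since `sin·w` is
odd, `⟨A⟩ = ⟨B⟩ = 0`; with `N = ∫ w`, `C = ∫ cos·w`, `S = ∫ sin²·w` one finds `⟨A²⟩ = S/N`,
`⟨B²⟩ = (C/λ - S/λ²)/N` and, as `[A,B]Φ = i cos φ·Φ`, `⟨[A,B]⟩ = iC/N`. Integrating
`(sin·w)' = cos·w - (2/λ) sin²·w` over a period gives `C = 2S/λ`, and both sides become
`S²/(λ²N²)`.
-/

open Real

noncomputable section

/-- The `L²(S¹)` inner product (linear in the second argument). -/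
def ipS1 (f g : ℝ → ℂ) : ℂ := ∫ φ in (-π)..π, (starRingEnd ℂ) (f φ) * g φ

/-- Multiplication by `sin φ`. -/
def Msin (f : ℝ → ℂ) : ℝ → ℂ := fun φ => (Real.sin φ : ℂ) * f φ

/-- The operator `D = -i ∂_φ`. -/
def Dop (f : ℝ → ℂ) : ℝ → ℂ := fun φ => -Complex.I * deriv f φ

/-- The (scaled) von Mises profile `Φ_λ^opt(φ) = exp(cos(φ)/λ)` as a complex function. -/
def vonMisesC (l : ℝ) : ℝ → ℂ := fun φ => (Real.exp (Real.cos φ / l) : ℂ)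

/-- Expectation of an operator `X` in the normalised state `Φ_λ^opt/‖Φ_λ^opt‖`. -/
def expValC (l : ℝ) (X : (ℝ → ℂ) → (ℝ → ℂ)) : ℂ :=
  ipS1 (vonMisesC l) (X (vonMisesC l)) / ipS1 (vonMisesC l) (vonMisesC l)

/-- Variance `⟨X²⟩ - ⟨X⟩²` of an operator `X` in the normalised von Mises state. -/
def varValC (l : ℝ) (X : (ℝ → ℂ) → (ℝ → ℂ)) : ℂ :=
  expValC l (fun f => X (X f)) - expValC l X ^ 2

lemma Dop_Msin_apply {f : ℝ → ℂ} {φ : ℝ} (hf : DifferentiableAt ℝ f φ) :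
    Dop (Msin f) φ = -Complex.I * cos φ * f φ + sin φ * Dop f φ := by
  have h : HasDerivAt (Msin f) (cos φ * f φ + sin φ * deriv f φ) φ :=
    ((hasDerivAt_sin φ).ofReal_comp).mul hf.hasDerivAt
  rw [Dop, Dop, h.deriv]
  ring

lemma Msin_Dop_sub_Dop_Msin {f : ℝ → ℂ} (hf : Differentiable ℝ f) :
    Msin (Dop f) - Dop (Msin f) = fun φ => Complex.I * (cos φ * f φ) := by
  funext φ
  rw [Pi.sub_apply, Dop_Msin_apply (hf φ), Msin]
  ring

lemma Dop_const_mul (c : ℂ) (f : ℝ → ℂ) : Dop (fun φ => c * f φ) = fun φ => c * Dop f φ := by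
  funext φ
  simp only [Dop, deriv_const_mul_field']
  ring

lemma ipS1_const_mul (f g : ℝ → ℂ) (c : ℂ) : ipS1 f (fun φ => c * g φ) = c * ipS1 f g := by
  simp only [ipS1, ← intervalIntegral.integral_const_mul]
  congr 1; funext φ; ring

theorem intervalIntegral.integral_neg_self_eq_zero_of_odd {E : Type*} [NormedAddCommGroup E]
    [NormedSpace ℝ E] {f : ℝ → E} (hf : ∀ x, f (-x) = -f x) (a : ℝ) :
    ∫ x in -a..a, f x = 0 := by
  have h := intervalIntegral.integral_comp_neg (a := -a) (b := a) f
  simp only [hf, intervalIntegral.integral_neg, neg_neg] at h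
  have h2 : (2 : ℝ) • ∫ x in -a..a, f x = 0 := by
    rw [two_smul]; nth_rewrite 1 [← h]; exact neg_add_cancel _
  exact (smul_eq_zero.mp h2).resolve_left two_ne_zero

/-- The density `Φ_λ^opt(φ)²` of the von Mises state. -/
def vonMisesWeight (l φ : ℝ) : ℝ := exp (2 * cos φ / l)

lemma intervalIntegrable_mul_vonMisesWeight {g : ℝ → ℝ} (hg : Continuous g) (l a b : ℝ) :
    IntervalIntegrable (fun φ => g φ * vonMisesWeight l φ) MeasureTheory.volume a b :=
  (hg.mul (by unfold vonMisesWeight; fun_prop)).intervalIntegrable a b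

lemma hasDerivAt_vonMisesWeight (l φ : ℝ) :
    HasDerivAt (vonMisesWeight l) (vonMisesWeight l φ * (2 * -sin φ / l)) φ :=
  (((hasDerivAt_cos φ).const_mul 2).div_const l).exp

lemma integral_sin_mul_vonMisesWeight (l : ℝ) :
    ∫ φ in (-π)..π, sin φ * vonMisesWeight l φ = 0 :=
  intervalIntegral.integral_neg_self_eq_zero_of_odd
    (fun φ => by simp only [vonMisesWeight, sin_neg, cos_neg, neg_mul]) π

/-- Integration by parts against `(sin φ · w)' = cos φ · w - (2/λ) sin² φ · w`. -/
lemma integral_cos_mul_vonMisesWeight (l : ℝ) :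
    ∫ φ in (-π)..π, cos φ * vonMisesWeight l φ =
      2 / l * ∫ φ in (-π)..π, sin φ ^ 2 * vonMisesWeight l φ := by
  have hderiv : ∀ φ ∈ Set.uIcc (-π) π, HasDerivAt (fun φ => sin φ * vonMisesWeight l φ)
      (cos φ * vonMisesWeight l φ - 2 / l * (sin φ ^ 2 * vonMisesWeight l φ)) φ := fun φ _ =>
    ((hasDerivAt_sin φ).mul (hasDerivAt_vonMisesWeight l φ)).congr_deriv (by ring)
  have hC := intervalIntegrable_mul_vonMisesWeight continuous_cos l (-π) π
  have hS := intervalIntegrable_mul_vonMisesWeight (g := fun φ => sin φ ^ 2) (by fun_prop) l (-π) π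
  have h := intervalIntegral.integral_eq_sub_of_hasDerivAt hderiv (hC.sub (hS.const_mul _))
  rw [intervalIntegral.integral_sub hC (hS.const_mul _), intervalIntegral.integral_const_mul] at h
  simp only [sin_neg, sin_pi, neg_zero, zero_mul, sub_self] at h
  linarith

lemma hasDerivAt_vonMisesC (l φ : ℝ) :
    HasDerivAt (vonMisesC l) (-(sin φ / l : ℝ) * vonMisesC l φ) φ := by
  have h := (((hasDerivAt_cos φ).div_const l).exp).ofReal_comp
  exact h.congr_deriv (by simp only [vonMisesC]; push_cast; ring)

lemma differentiable_vonMisesC (l : ℝ) : Differentiable ℝ (vonMisesC l) :=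
  fun φ => (hasDerivAt_vonMisesC l φ).differentiableAt

lemma Dop_vonMisesC (l : ℝ) :
    Dop (vonMisesC l) = fun φ => Complex.I / l * Msin (vonMisesC l) φ := by
  funext φ
  simp only [Dop, Msin, (hasDerivAt_vonMisesC l φ).deriv]
  push_cast
  ring

lemma ipS1_vonMisesC (l : ℝ) (g : ℝ → ℝ) :
    ipS1 (vonMisesC l) (fun φ => g φ * vonMisesC l φ) =
      ((∫ φ in (-π)..π, g φ * vonMisesWeight l φ : ℝ) : ℂ) := by
  rw [ipS1, ← intervalIntegral.integral_ofReal]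
  congr 1; funext φ
  have hsq : exp (cos φ / l) * exp (cos φ / l) = vonMisesWeight l φ := by
    rw [vonMisesWeight, ← exp_add]; ring_nf
  simp only [vonMisesC, Complex.conj_ofReal, ← hsq]
  push_cast
  ring

lemma ipS1_vonMisesC_self (l : ℝ) :
    ipS1 (vonMisesC l) (vonMisesC l) = ((∫ φ in (-π)..π, vonMisesWeight l φ : ℝ) : ℂ) := by
  simpa using ipS1_vonMisesC l (fun _ => 1)

lemma ipS1_vonMisesC_Msin (l : ℝ) : ipS1 (vonMisesC l) (Msin (vonMisesC l)) = 0 := by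
  have h := ipS1_vonMisesC l sin
  rwa [integral_sin_mul_vonMisesWeight, Complex.ofReal_zero] at h

lemma ipS1_vonMisesC_Msin_Msin (l : ℝ) :
    ipS1 (vonMisesC l) (Msin (Msin (vonMisesC l))) =
      ((∫ φ in (-π)..π, sin φ ^ 2 * vonMisesWeight l φ : ℝ) : ℂ) := by
  rw [← ipS1_vonMisesC]
  congr 1; funext φ
  simp only [Msin]; push_cast; ring

lemma ipS1_vonMisesC_Dop (l : ℝ) : ipS1 (vonMisesC l) (Dop (vonMisesC l)) = 0 := by
  rw [Dop_vonMisesC, ipS1_const_mul, ipS1_vonMisesC_Msin, mul_zero]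

lemma Dop_Dop_vonMisesC (l : ℝ) :
    Dop (Dop (vonMisesC l)) =
      fun φ => ((cos φ / l - sin φ ^ 2 / l ^ 2 : ℝ) : ℂ) * vonMisesC l φ := by
  rw [Dop_vonMisesC, Dop_const_mul]
  funext φ
  rw [Dop_Msin_apply (differentiable_vonMisesC l φ), Dop_vonMisesC]
  simp only [Msin, Complex.ofReal_sub, Complex.ofReal_div, Complex.ofReal_pow]
  linear_combination
    (((sin φ : ℝ) : ℂ) ^ 2 / l ^ 2 - ((cos φ : ℝ) : ℂ) / l) * vonMisesC l φ * Complex.I_sq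

lemma ipS1_vonMisesC_Dop_Dop (l : ℝ) :
    ipS1 (vonMisesC l) (Dop (Dop (vonMisesC l))) =
      ((1 / l * (∫ φ in (-π)..π, cos φ * vonMisesWeight l φ) -
        1 / l ^ 2 * ∫ φ in (-π)..π, sin φ ^ 2 * vonMisesWeight l φ : ℝ) : ℂ) := by
  have hC := intervalIntegrable_mul_vonMisesWeight continuous_cos l (-π) π
  have hS := intervalIntegrable_mul_vonMisesWeight (g := fun φ => sin φ ^ 2) (by fun_prop) l (-π) π
  rw [Dop_Dop_vonMisesC, ipS1_vonMisesC, ← intervalIntegral.integral_const_mul,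
    ← intervalIntegral.integral_const_mul,
    ← intervalIntegral.integral_sub (hC.const_mul _) (hS.const_mul _)]
  congr 2; funext φ; ring

theorem vonMises_uncertainty_gap_one_general (l : ℝ) :
    varValC l Msin * varValC l Dop =
      (((1 : ℝ) / 4) : ℂ) *
        ((‖expValC l (fun f => Msin (Dop f) - Dop (Msin f))‖ : ℝ) ^ 2 : ℝ) := by
  simp only [varValC, expValC, Msin_Dop_sub_Dop_Msin (differentiable_vonMisesC l), ipS1_const_mul,
    ipS1_vonMisesC_self, ipS1_vonMisesC_Msin, ipS1_vonMisesC_Msin_Msin, ipS1_vonMisesC_Dop,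
    ipS1_vonMisesC_Dop_Dop]
  rw [ipS1_vonMisesC, integral_cos_mul_vonMisesWeight]
  generalize (∫ φ in (-π)..π, sin φ ^ 2 * vonMisesWeight l φ) = S
  generalize (∫ φ in (-π)..π, vonMisesWeight l φ) = N
  rw [norm_div, norm_mul, Complex.norm_I, one_mul, Complex.norm_real, Complex.norm_real,
    Real.norm_eq_abs, Real.norm_eq_abs, ← abs_div, sq_abs]
  push_cast
  ring

/-- **The von Mises wavelet achieves uncertainty gap exactly 1**: for `A = M_sin` and
`B = -i∂_φ`, in the normalised state `Φ_λ^opt/‖Φ_λ^opt‖` one has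
`Var(A)·Var(B) = (1/4)|⟨[A,B]⟩|²`. -/
theorem vonMises_uncertainty_gap_one (l : ℝ) (hl : l ≠ 0) :
    varValC l Msin * varValC l Dop =
      (((1 : ℝ) / 4) : ℂ) *
        ((‖expValC l (fun f => Msin (Dop f) - Dop (Msin f))‖ : ℝ) ^ 2 : ℝ) :=
  vonMises_uncertainty_gap_one_general l

end
end
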